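/- arXiv:1810.03802 — 6 statements merged into one kernel-verified Lean document; each statement's English description precedes it below -/
import Mathlib

section
/- Let G = (V, E) be a finite connected simple graph, w : E → ℝ an injective weight function, and T the minimal spanning tree of (G, w). Then for any vertices x, y ∈ V, the (unique) path in T from x to y and any path in G from x to y satisfy: the maximum of w over the edges of the T-path is less than or equal to the maximum of w over the edges of the G-path. -/
/-- A spanning tree of a simple graph `G` on `V`: a graph on the same vertex set which is
a subgraph of `G` (i.e. `T ≤ G`), connected and acyclic. -/
def IsSpanningTree {V : Type*} (G T : SimpleGraph V) : Prop :=
  T ≤ G ∧ T.Connected ∧ T.IsAcyclic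

/-- The total weight of (the edges of) a graph `T` with respect to a weight function `w`. -/
noncomputable def treeWeight {V : Type*} [Finite V] (T : SimpleGraph V) (w : Sym2 V → ℝ) : ℝ :=
  ∑ e ∈ T.edgeSet.toFinite.toFinset, w e

/-!
If some edge `e` of the tree path were heavier than every edge of the `G`-path, then, since
`e` lies on the unique tree path from `x` to `y`, deleting it from `T` separates `x` from `y`.
Some edge `f` of the `G`-path therefore joins the two sides, and `T - e + f` is a spanning
tree of `G` that is strictly lighter than `T`.
-/

namespace SimpleGraph

variable {V : Type*} {K : SimpleGraph V} {a b u v : V}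

theorem reachable_sup_edge_iff :
    (K ⊔ edge a b).Reachable u v ↔ K.Reachable u v ∨ (K.Reachable u a ∧ K.Reachable b v) ∨
      (K.Reachable u b ∧ K.Reachable a v) := by
  refine ⟨fun ⟨p⟩ ↦ ?_, ?_⟩
  · induction p with
    | nil => exact .inl .rfl
    | @cons u u' v h q ih =>
      have ih := ih ⟨q⟩
      rw [sup_adj, edge_adj] at h
      rcases h with h | ⟨⟨rfl, rfl⟩ | ⟨rfl, rfl⟩, -⟩
      · have := h.reachable
        grind [Reachable.trans]
      all_goals grind [Reachable.trans, Reachable.symm, Reachable.refl]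
  · have hab : (K ⊔ edge a b).Reachable a b := by
      obtain rfl | hne := eq_or_ne a b
      · rfl
      · exact Adj.reachable (Or.inr (by simp [edge_adj, hne]))
    have hle : K ≤ K ⊔ edge a b := le_sup_left
    rintro (h | ⟨h₁, h₂⟩ | ⟨h₁, h₂⟩)
    · exact h.mono hle
    · exact ((h₁.mono hle).trans hab).trans (h₂.mono hle)
    · exact ((h₁.mono hle).trans hab.symm).trans (h₂.mono hle)

theorem Reachable.of_sup_edge (h : (K ⊔ edge a b).Reachable u v) (hab : K.Reachable a b) :
    K.Reachable u v := by
  rcases reachable_sup_edge_iff.mp h with h | ⟨h₁, h₂⟩ | ⟨h₁, h₂⟩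
  · exact h
  · exact (h₁.trans hab).trans h₂
  · exact (h₁.trans hab.symm).trans h₂

theorem deleteEdges_sup_edge_of_adj (h : K.Adj a b) : K.deleteEdges {s(a, b)} ⊔ edge a b = K := by
  change K \ edge a b ⊔ edge a b = K
  rw [sdiff_sup_self, sup_edge_of_adj _ h]

theorem IsAcyclic.not_reachable_deleteEdges_of_mem_edges {T : SimpleGraph V} (hT : T.IsAcyclic)
    {x y : V} {p : T.Walk x y} (hp : p.IsPath) {e : Sym2 V} (he : e ∈ p.edges) :
    ¬ (T.deleteEdges {e}).Reachable x y := by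
  classical
  rintro ⟨q⟩
  have hq : q.bypass.mapLe (deleteEdges_le _) = p :=
    congrArg Subtype.val ((hT.subsingleton_path x y).elim ⟨_, q.bypass_isPath.mapLe _⟩ ⟨p, hp⟩)
  have he' : e ∈ (T.deleteEdges {e}).edgeSet := by
    rw [← hq, Walk.edges_mapLe_eq_edges] at he
    exact q.bypass.edges_subset_edgeSet he
  simp [edgeSet_deleteEdges] at he'

theorem Walk.exists_dart_not_reachable {G H : SimpleGraph V} {x y : V} (p : G.Walk x y)
    (h : ¬ H.Reachable x y) : ∃ d ∈ p.darts, ¬ H.Reachable d.fst d.snd := by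
  obtain ⟨d, hd, hfst, hsnd⟩ := p.exists_boundary_dart {v | H.Reachable x v} (Reachable.refl x) h
  exact ⟨d, hd, fun hd' ↦ hsnd (hfst.trans hd')⟩

end SimpleGraph

open SimpleGraph

section Exchange

variable {V : Type*} {G T : SimpleGraph V} {a b c d : V}

theorem IsSpanningTree.exchange (hT : IsSpanningTree G T) (hab : T.Adj a b) (hcd : G.Adj c d)
    (hsep : ¬ (T.deleteEdges {s(a, b)}).Reachable c d) :
    IsSpanningTree G (T.deleteEdges {s(a, b)} ⊔ edge c d) := by
  obtain ⟨hTG, hTconn, hTacyc⟩ := hT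
  set D := T.deleteEdges {s(a, b)}
  have hDT : D ⊔ edge a b = T := deleteEdges_sup_edge_of_adj hab
  have hD : D ≤ D ⊔ edge c d := le_sup_left
  have hcd' : (D ⊔ edge c d).Reachable c d :=
    Adj.reachable (Or.inr (by simp [edge_adj, hcd.ne]))
  -- `c` and `d` lie on opposite sides of `s(a, b)`, so `s(c, d)` reconnects `a` and `b`
  have hab' : (D ⊔ edge c d).Reachable a b := by
    rcases reachable_sup_edge_iff.mp (hDT ▸ hTconn.preconnected c d) with h | ⟨h₁, h₂⟩ | ⟨h₁, h₂⟩
    · exact absurd h hsep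
    · exact ((h₁.symm.mono hD).trans hcd').trans (h₂.symm.mono hD)
    · exact ((h₂.mono hD).trans hcd'.symm).trans (h₁.mono hD)
  refine ⟨sup_le ((deleteEdges_le _).trans hTG) ((edge_le_iff G).2 (.inr hcd)), ?_, ?_⟩
  · refine (connected_iff _).mpr ⟨fun u v ↦ Reachable.of_sup_edge ?_ hab', hTconn.nonempty⟩
    exact (hDT ▸ hTconn.preconnected u v).mono (sup_le_sup_right hD _)
  · exact (hTacyc.anti (deleteEdges_le _)).sup_edge_of_not_reachable hsep

variable [Finite V] (w : Sym2 V → ℝ)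

theorem treeWeight_sup_edge {H : SimpleGraph V} (hcd : c ≠ d) (hn : ¬ H.Adj c d) :
    treeWeight (H ⊔ edge c d) w = treeWeight H w + w s(c, d) := by
  classical
  have hE : (H ⊔ edge c d).edgeSet = insert s(c, d) H.edgeSet := by
    rw [edgeSet_sup, edgeSet_edge_of_ne hcd, Set.union_singleton]
  simp only [treeWeight, hE, Set.Finite.toFinset_insert]
  rw [Finset.sum_insert (by simpa using hn), add_comm]

theorem treeWeight_exchange (hab : T.Adj a b) (hcd : c ≠ d) (hn : ¬ T.Adj c d) :
    treeWeight (T.deleteEdges {s(a, b)} ⊔ edge c d) w + w s(a, b) =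
      treeWeight T w + w s(c, d) := by
  have hn' : ¬ (T.deleteEdges {s(a, b)} ⊔ edge c d).Adj a b := by
    rw [sup_adj, deleteEdges_adj, edge_adj]
    rintro (⟨-, h⟩ | ⟨⟨rfl, rfl⟩ | ⟨rfl, rfl⟩, -⟩)
    · exact h rfl
    · exact hn hab
    · exact hn hab.symm
  rw [← treeWeight_sup_edge w hab.ne hn', ← treeWeight_sup_edge w hcd hn, sup_right_comm,
    deleteEdges_sup_edge_of_adj hab]

end Exchange

theorem IsSpanningTree.exists_mem_edges_le_of_minimal {V : Type*} [Finite V]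
    {G T : SimpleGraph V} {w : Sym2 V → ℝ} (hT : IsSpanningTree G T)
    (hmin : ∀ T' : SimpleGraph V, IsSpanningTree G T' → treeWeight T w ≤ treeWeight T' w)
    {x y : V} {pT : T.Walk x y} (hpT : pT.IsPath) (pG : G.Walk x y) {e : Sym2 V}
    (he : e ∈ pT.edges) : ∃ f ∈ pG.edges, w e ≤ w f := by
  by_contra! hlt
  cases e with | h a b
  have hab : T.Adj a b := pT.edges_subset_edgeSet he
  obtain ⟨⟨⟨c, d⟩, hcd⟩, hdart, hsep⟩ :=
    pG.exists_dart_not_reachable (hT.2.2.not_reachable_deleteEdges_of_mem_edges hpT he)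
  have hwf : w s(c, d) < w s(a, b) := hlt _ (List.mem_map_of_mem (f := Dart.edge) hdart)
  have hnT : ¬ T.Adj c d := fun h ↦ hsep <| Adj.reachable <|
    deleteEdges_adj.mpr ⟨h, fun he ↦ hwf.ne (congrArg w he)⟩
  have := hmin _ (hT.exchange hab hcd hsep)
  have := treeWeight_exchange w hab hcd.ne hnT
  linarith

theorem List.maximum_map_le_of_forall_exists_le {α β γ : Type*} [LinearOrder γ]
    {f : α → γ} {g : β → γ} {l : List α} {l' : List β} (h : ∀ a ∈ l, ∃ b ∈ l', f a ≤ g b) :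
    (l.map f).maximum ≤ (l'.map g).maximum := by
  refine List.maximum_le_of_forall_le fun _ hm ↦ ?_
  obtain ⟨a, ha, rfl⟩ := List.mem_map.mp hm
  obtain ⟨b, hb, hab⟩ := h a ha
  exact (WithBot.coe_le_coe.mpr hab).trans (List.le_maximum_of_mem' (List.mem_map_of_mem hb))

theorem mst_minimax_general {V : Type*} [Fintype V]
    (G : SimpleGraph V)
    (w : Sym2 V → ℝ)
    (T : SimpleGraph V) (hT : IsSpanningTree G T)
    (hmin : ∀ T' : SimpleGraph V, IsSpanningTree G T' →
      treeWeight T w ≤ treeWeight T' w)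
    (x y : V) (pT : T.Walk x y) (hpT : pT.IsPath)
    (pG : G.Walk x y) :
    (pT.edges.map w).maximum ≤ (pG.edges.map w).maximum :=
  List.maximum_map_le_of_forall_exists_le fun _ he ↦
    hT.exists_mem_edges_le_of_minimal hmin hpT pG he

/-- Minimax paths property of the MST: for any two vertices `x, y`, the maximum edge weight
along the (unique) path in the MST `T` from `x` to `y` is at most the maximum edge weight
along any path in `G` from `x` to `y`. -/
theorem mst_minimax {V : Type*} [Fintype V]
    (G : SimpleGraph V) (hG : G.Connected)
    (w : Sym2 V → ℝ) (hw : Set.InjOn w G.edgeSet)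
    (T : SimpleGraph V) (hT : IsSpanningTree G T)
    (hmin : ∀ T' : SimpleGraph V, IsSpanningTree G T' →
      treeWeight T w ≤ treeWeight T' w)
    (x y : V) (pT : T.Walk x y) (hpT : pT.IsPath)
    (pG : G.Walk x y) (hpG : pG.IsPath) :
    (pT.edges.map w).maximum ≤ (pG.edges.map w).maximum :=
  mst_minimax_general G w T hT hmin x y pT hpT pG
end

section
/- Let G = (V, E) be a finite connected simple graph and w : E → ℝ an injective weight function. Suppose T' is a spanning tree of G with the minimax path property: for every pair of vertices x, y ∈ V and every path P' in G from x to y, the maximum of w over the edges of the T'-path from x to y is at most the maximum of w over the edges of P'. Then T' is the minimal spanning tree of (G, w); in particular, T' is the only spanning tree of G with this property. -/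
/-- `T` has the minimax path property in `(G, w)`: for all vertices `x, y`, for every path
in `T` from `x` to `y` and every path in `G` from `x` to `y`, the maximum weight of an edge
of the `T`-path is at most the maximum weight of an edge of the `G`-path. -/
def HasMinimaxProperty {V : Type*} (G T : SimpleGraph V) (w : Sym2 V → ℝ) : Prop :=
  ∀ (x y : V) (pT : T.Walk x y), pT.IsPath →
    ∀ pG : G.Walk x y, pG.IsPath →
      (pT.edges.map w).maximum ≤ (pG.edges.map w).maximum

namespace SimpleGraph

variable {V : Type*} {G T : SimpleGraph V}

theorem Walk.reachable_deleteEdges_or {a b u v : V} (p : G.Walk u v)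
    (hu : (G.deleteEdges {s(a, b)}).Reachable a u ∨ (G.deleteEdges {s(a, b)}).Reachable b u) :
    (G.deleteEdges {s(a, b)}).Reachable a v ∨ (G.deleteEdges {s(a, b)}).Reachable b v := by
  induction p with
  | nil => exact hu
  | @cons x y z hxy q ih =>
    apply ih
    by_cases he : s(x, y) = s(a, b)
    · rcases Sym2.eq_iff.mp he with ⟨rfl, rfl⟩ | ⟨rfl, rfl⟩
      · exact .inr .rfl
      · exact .inl .rfl
    · have hadj : (G.deleteEdges {s(a, b)}).Adj x y := by simp [hxy, he]
      exact hu.imp (·.trans hadj.reachable) (·.trans hadj.reachable)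

theorem IsTree.isTree_deleteEdges_sup_edge (hT : T.IsTree) {a b x y : V}
    (hx : (T.deleteEdges {s(a, b)}).Reachable a x)
    (hy : ¬(T.deleteEdges {s(a, b)}).Reachable a y) :
    (T.deleteEdges {s(a, b)} ⊔ edge x y).IsTree := by
  set H := T.deleteEdges {s(a, b)}
  have hsplit (v : V) : H.Reachable a v ∨ H.Reachable b v :=
    (hT.connected.preconnected a v).some.reachable_deleteEdges_or (.inl .rfl)
  have hby : H.Reachable b y := (hsplit y).resolve_left hy
  have hxy : x ≠ y := by rintro rfl; exact hy hx
  have hmono {u v : V} (h : H.Reachable u v) : (H ⊔ edge x y).Reachable u v := h.mono le_sup_left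
  have hab : (H ⊔ edge x y).Reachable a b :=
    have hxy' : (H ⊔ edge x y).Adj x y := by simp [edge_adj, hxy]
    ((hmono hx).trans hxy'.reachable).trans (hmono hby).symm
  refine ⟨(connected_iff_exists_forall_reachable _).mpr ⟨a, fun v => ?_⟩, ?_⟩
  · exact (hsplit v).elim hmono (hab.trans <| hmono ·)
  · exact (hT.isAcyclic.anti (deleteEdges_le _)).sup_edge_of_not_reachable
      fun hxy' => hy (hx.trans hxy')

end SimpleGraph

open SimpleGraph

theorem IsSpanningTree.isTree {V : Type*} {G T : SimpleGraph V} (hT : IsSpanningTree G T) :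
    T.IsTree :=
  ⟨hT.2.1, hT.2.2⟩

theorem IsSpanningTree.eq_of_le {V : Type*} {G T T' : SimpleGraph V} (hT : IsSpanningTree G T)
    (hT' : IsSpanningTree G T') (hle : T' ≤ T) : T' = T :=
  (isTree_iff_minimal_connected.mp hT.isTree).eq_of_le hT'.2.1 hle

theorem treeWeight_deleteEdges_sup_edge {V : Type*} [Finite V] (w : Sym2 V → ℝ)
    {T : SimpleGraph V} {f : Sym2 V} (hf : f ∈ T.edgeSet) {x y : V} (hxy : x ≠ y)
    (he : s(x, y) ∉ T.edgeSet) :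
    treeWeight (T.deleteEdges {f} ⊔ edge x y) w = treeWeight T w - w f + w s(x, y) := by
  classical
  have hedges : (T.deleteEdges {f} ⊔ edge x y).edgeSet.toFinite.toFinset =
      insert s(x, y) (T.edgeSet.toFinite.toFinset.erase f) := by
    ext e
    simp only [Set.Finite.mem_toFinset, edgeSet_sup, edgeSet_deleteEdges, edgeSet_edge_of_ne hxy,
      Finset.mem_insert, Finset.mem_erase, Set.mem_union, Set.mem_sdiff, Set.mem_singleton_iff]
    tauto
  have hnotMem : s(x, y) ∉ T.edgeSet.toFinite.toFinset.erase f := by simp [he]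
  rw [treeWeight, hedges, Finset.sum_insert hnotMem,
    Finset.sum_erase_eq_sub (by simpa using hf), treeWeight]
  ring

theorem HasMinimaxProperty.weight_le_of_mem_edges {V : Type*} {G T : SimpleGraph V}
    {w : Sym2 V → ℝ} (hmm : HasMinimaxProperty G T w) {a b : V} (hab : G.Adj a b)
    {p : T.Walk a b} (hp : p.IsPath) {e : Sym2 V} (he : e ∈ p.edges) : w e ≤ w s(a, b) := by
  have hmax := hmm a b p hp (Path.singleton hab) (Path.singleton hab).2
  simp only [Path.singleton, Walk.edges_cons, Walk.edges_nil, List.map_cons, List.map_nil,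
    List.maximum_singleton] at hmax
  exact WithBot.coe_le_coe.mp ((List.le_maximum_of_mem' (List.mem_map_of_mem he)).trans hmax)

theorem HasMinimaxProperty.exists_lighter_exchange {V : Type*} [Finite V] {G T T' : SimpleGraph V}
    {w : Sym2 V → ℝ} (hw : Set.InjOn w G.edgeSet) (hT' : IsSpanningTree G T')
    (hmm : HasMinimaxProperty G T' w) (hT : IsSpanningTree G T) {f : Sym2 V}
    (hf : f ∈ T.edgeSet \ T'.edgeSet) :
    ∃ T₀ : SimpleGraph V, IsSpanningTree G T₀ ∧ treeWeight T₀ w < treeWeight T w ∧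
      T₀.edgeSet \ T'.edgeSet = (T.edgeSet \ T'.edgeSet) \ {f} := by
  obtain ⟨hfT, hfT'⟩ := hf
  induction f using Sym2.ind with | _ a b =>
  set H := T.deleteEdges {s(a, b)}
  have hab : G.Adj a b := hT.1 hfT
  obtain ⟨p, hp⟩ := hT'.2.1.exists_isPath a b
  have hbridge : ¬H.Reachable a b := isAcyclic_iff_forall_isBridge.mp hT.2.2 hfT
  obtain ⟨d, hdp, hx, hy⟩ := p.exists_boundary_dart {v | H.Reachable a v} .rfl hbridge
  have heT' : s(d.fst, d.snd) ∈ T'.edgeSet := d.adj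
  have hef : s(d.fst, d.snd) ≠ s(a, b) := fun h => hfT' (h ▸ heT')
  have heT : s(d.fst, d.snd) ∉ T.edgeSet := fun he =>
    hy (hx.trans (Adj.reachable (by simpa [H] using And.intro he hef)))
  have hlt : w s(d.fst, d.snd) < w s(a, b) :=
    (hmm.weight_le_of_mem_edges hab hp (p.edges_eq_map_darts ▸ List.mem_map_of_mem hdp)).lt_of_ne
      fun h => hef (hw (hT'.1 heT') hab h)
  have htree := hT.isTree.isTree_deleteEdges_sup_edge hx hy
  refine ⟨H ⊔ edge d.fst d.snd, ⟨?_, htree.connected, htree.isAcyclic⟩, ?_, ?_⟩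
  · exact sup_le ((deleteEdges_le _).trans hT.1) ((edge_le_iff G).mpr (.inr (hT'.1 d.adj)))
  · rw [treeWeight_deleteEdges_sup_edge w hfT d.adj.ne heT]
    linarith
  · ext e
    simp only [H, edgeSet_sup, edgeSet_deleteEdges, edgeSet_edge_of_ne d.adj.ne, Set.mem_union,
      Set.mem_sdiff, Set.mem_singleton_iff]
    grind

theorem HasMinimaxProperty.treeWeight_le {V : Type*} [Finite V] {G T' : SimpleGraph V}
    {w : Sym2 V → ℝ} (hw : Set.InjOn w G.edgeSet) (hT' : IsSpanningTree G T')
    (hmm : HasMinimaxProperty G T' w) {T : SimpleGraph V} (hT : IsSpanningTree G T) :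
    treeWeight T' w ≤ treeWeight T w := by
  induction hn : (T.edgeSet \ T'.edgeSet).ncard using Nat.strong_induction_on generalizing T
    with | _ n ih =>
  rcases (T.edgeSet \ T'.edgeSet).eq_empty_or_nonempty with hsub | ⟨f, hf⟩
  · rw [hT'.eq_of_le hT (edgeSet_subset_edgeSet.mp (Set.sdiff_eq_empty.mp hsub))]
  · obtain ⟨T₀, hT₀, hlt, hdiff⟩ := hmm.exists_lighter_exchange hw hT' hT hf
    have hcard : (T₀.edgeSet \ T'.edgeSet).ncard < n :=
      hn ▸ hdiff ▸ Set.ncard_sdiff_singleton_lt_of_mem hf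
    exact (ih _ hcard hT₀ rfl).trans hlt.le

theorem spanning_tree_with_minimax_property_is_mst_general {V : Type*} [Fintype V]
    (G : SimpleGraph V)
    (w : Sym2 V → ℝ) (hw : Set.InjOn w G.edgeSet)
    (T' : SimpleGraph V) (hT' : IsSpanningTree G T')
    (hminimax : HasMinimaxProperty G T' w) :
    (∀ T'' : SimpleGraph V, IsSpanningTree G T'' →
        treeWeight T' w ≤ treeWeight T'' w) ∧
      (∀ T'' : SimpleGraph V, IsSpanningTree G T'' →
        HasMinimaxProperty G T'' w → T'' = T') := by
  refine ⟨fun T'' hT'' => hminimax.treeWeight_le hw hT' hT'', fun T'' hT'' hminimax'' => ?_⟩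
  refine hT'.eq_of_le hT'' (edgeSet_subset_edgeSet.mp fun f hf => ?_)
  by_contra hfT'
  obtain ⟨T₀, hT₀, hlt, -⟩ := hminimax.exists_lighter_exchange hw hT' hT'' ⟨hf, hfT'⟩
  exact hlt.not_ge (hminimax''.treeWeight_le hw hT'' hT₀)

/-- A spanning tree with the minimax path property is the minimal spanning tree; in
particular, it is the unique spanning tree with this property. -/
theorem spanning_tree_with_minimax_property_is_mst {V : Type*} [Fintype V]
    (G : SimpleGraph V) (hG : G.Connected)
    (w : Sym2 V → ℝ) (hw : Set.InjOn w G.edgeSet)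
    (T' : SimpleGraph V) (hT' : IsSpanningTree G T')
    (hminimax : HasMinimaxProperty G T' w) :
    (∀ T'' : SimpleGraph V, IsSpanningTree G T'' →
        treeWeight T' w ≤ treeWeight T'' w) ∧
      (∀ T'' : SimpleGraph V, IsSpanningTree G T'' →
        HasMinimaxProperty G T'' w → T'' = T') :=
  spanning_tree_with_minimax_property_is_mst_general G w hw T' hT' hminimax
end

section
/- Let G = (V, E) be a finite connected simple graph, w : E → ℝ an injective weight function, and T the minimal spanning tree of (G, w). Fix u ∈ ℝ and let G^u be the subgraph of G with vertex set V and edge set {e ∈ E : w(e) ≤ u}. Let C be (the vertex set of) a connected component of G^u. Then the set of edges of T having both endpoints in C is the edge set of a spanning tree of the induced subgraph G[C], and this spanning tree is the minimal spanning tree of G[C] with respect to the restriction of w. -/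
/-- The percolation graph `G^u`: keep exactly the edges of `G` of weight at most `u`. -/
def percolate {V : Type*} (G : SimpleGraph V) (w : Sym2 V → ℝ) (u : ℝ) : SimpleGraph V where
  Adj a b := G.Adj a b ∧ w s(a, b) ≤ u
  symm := ⟨by
    intro a b h
    refine ⟨h.1.symm, ?_⟩
    rw [Sym2.eq_swap]
    exact h.2⟩
  loopless := ⟨fun a h => G.loopless.irrefl a h.1⟩

/-! An edge of the minimal spanning tree `T` lying on the tree path between the ends of a
`G`-edge `xy` is never heavier than `xy`: otherwise swapping it for `xy` would give a lighter
spanning tree. Hence the tree path between the ends of an edge of weight `≤ u` uses only edges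
of weight `≤ u`, so it stays inside the component `C` of `G^u`, and `T[C]` is connected; it is
acyclic as a subgraph of `T`. If some spanning tree `T''` of `G[C]` were lighter than `T[C]`,
replacing `T[C]` by `T''` inside `T` would give a connected graph with as many edges as `T`,
i.e. a spanning tree of `G` lighter than `T`. -/

section

open SimpleGraph

variable {V : Type*}

def IsMinSpanningTree [Finite V] (G : SimpleGraph V) (w : Sym2 V → ℝ) (T : SimpleGraph V) :
    Prop :=
  IsSpanningTree G T ∧
    ∀ T' : SimpleGraph V, IsSpanningTree G T' → treeWeight T w ≤ treeWeight T' w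

namespace SimpleGraph

lemma Preconnected.of_adj_reachable {G H : SimpleGraph V} (hG : G.Preconnected)
    (h : ∀ ⦃a b : V⦄, G.Adj a b → H.Reachable a b) : H.Preconnected := fun a b => by
  have hab := hG a b
  rw [reachable_iff_reflTransGen] at hab ⊢
  exact Relation.ReflTransGen.lift' id
    (fun x y hxy => (reachable_iff_reflTransGen x y).1 (h hxy)) a b hab

lemma Connected.of_adj_reachable {G H : SimpleGraph V} (hG : G.Connected)
    (h : ∀ ⦃a b : V⦄, G.Adj a b → H.Reachable a b) : H.Connected :=
  haveI := hG.nonempty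
  ⟨hG.preconnected.of_adj_reachable h⟩

lemma IsTree.ncard_edgeSet_eq [Finite V] {T T' : SimpleGraph V} (hT : T.IsTree)
    (hT' : T'.IsTree) : T.edgeSet.ncard = T'.edgeSet.ncard := by
  have h := (isTree_iff_connected_and_card.1 hT).2
  have h' := (isTree_iff_connected_and_card.1 hT').2
  simp only [Nat.card_coe_set_eq] at h h'
  omega

lemma IsTree.of_connected_of_ncard_edgeSet_le [Finite V] {T T' : SimpleGraph V}
    (hT : T.IsTree) (hT' : T'.Connected) (hcard : T'.edgeSet.ncard ≤ T.edgeSet.ncard) :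
    T'.IsTree := by
  have htree := (isTree_iff_connected_and_card.1 hT).2
  have hlower := hT'.card_vert_le_card_edgeSet_add_one
  simp only [Nat.card_coe_set_eq] at htree hlower
  exact isTree_iff_connected_and_card.2 ⟨hT', by rw [Nat.card_coe_set_eq]; omega⟩

lemma ncard_edgeSet_sup_of_disjoint [Finite V] {H₁ H₂ : SimpleGraph V}
    (h : Disjoint H₁ H₂) : (H₁ ⊔ H₂).edgeSet.ncard = H₁.edgeSet.ncard + H₂.edgeSet.ncard := by
  rw [edgeSet_sup, Set.ncard_union_eq (disjoint_edgeSet.2 h)]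

lemma ncard_edgeSet_spanningCoe {s : Set V} (K : SimpleGraph s) :
    K.spanningCoe.edgeSet.ncard = K.edgeSet.ncard := by
  rw [edgeSet_map]
  exact Set.ncard_image_of_injective _ (Sym2.map.injective Subtype.val_injective)

lemma disjoint_sdiff_spanningCoe_induce (T : SimpleGraph V) {s : Set V} (K : SimpleGraph s) :
    Disjoint (T \ (T.induce s).spanningCoe) K.spanningCoe := by
  rw [disjoint_iff_inf_le]
  intro x y hxy
  rw [inf_adj, sdiff_adj, map_adj] at hxy
  obtain ⟨⟨hT, hnot⟩, -, a, b, -, rfl, rfl⟩ := hxy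
  exact hnot ⟨a, b, hT, rfl, rfl⟩

lemma ConnectedComponent.reachable_induce_supp_of_le {H P : SimpleGraph V} (hHP : H ≤ P)
    (c : P.ConnectedComponent) {x y : V} (hx : x ∈ c.supp) (hy : y ∈ c.supp)
    (h : H.Reachable x y) : (H.induce c.supp).Reachable ⟨x, hx⟩ ⟨y, hy⟩ := by
  classical
  obtain ⟨q⟩ := h
  have hq : ∀ z ∈ q.support, z ∈ c.supp := fun z hz =>
    c.connectedComponentMk_supp_subset_supp hHP hx
      (ConnectedComponent.eq.2 (q.takeUntil z hz).reachable.symm)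
  exact ⟨q.induce c.supp hq⟩

end SimpleGraph

section TreeWeight

variable [Finite V]

lemma treeWeight_eq_finsum (T : SimpleGraph V) (w : Sym2 V → ℝ) :
    treeWeight T w = ∑ᶠ e ∈ T.edgeSet, w e :=
  (finsum_mem_eq_finite_toFinset_sum w T.edgeSet.toFinite).symm

lemma treeWeight_sup_of_disjoint {H₁ H₂ : SimpleGraph V} (h : Disjoint H₁ H₂) (w : Sym2 V → ℝ) :
    treeWeight (H₁ ⊔ H₂) w = treeWeight H₁ w + treeWeight H₂ w := by
  simp only [treeWeight_eq_finsum, edgeSet_sup]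
  exact finsum_mem_union (disjoint_edgeSet.2 h) (Set.toFinite _) (Set.toFinite _)

lemma treeWeight_spanningCoe {s : Set V} (K : SimpleGraph s) (w : Sym2 V → ℝ) :
    treeWeight K.spanningCoe w = treeWeight K (fun e => w (e.map (↑))) := by
  rw [treeWeight_eq_finsum, treeWeight_eq_finsum, edgeSet_map]
  exact finsum_mem_image (Sym2.map.injective Subtype.val_injective).injOn

lemma treeWeight_edge {a b : V} (hab : a ≠ b) (w : Sym2 V → ℝ) :
    treeWeight (edge a b) w = w s(a, b) := by
  rw [treeWeight_eq_finsum, edgeSet_edge_of_ne hab, finsum_mem_singleton]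

end TreeWeight

lemma mem_edgeSet_percolate {G : SimpleGraph V} {w : Sym2 V → ℝ} {u : ℝ} {e : Sym2 V} :
    e ∈ (percolate G w u).edgeSet ↔ e ∈ G.edgeSet ∧ w e ≤ u := by
  obtain ⟨a, b⟩ := e
  rfl

namespace IsMinSpanningTree

variable [Finite V] {G T : SimpleGraph V} {w : Sym2 V → ℝ}

/-- Trading the edges of `H ≤ T` for those of `H'` yields a connected graph with at most as many
edges as `T`, hence another spanning tree. -/
lemma treeWeight_le_of_exchange (hT : IsMinSpanningTree G w T) {H H' : SimpleGraph V}
    (hH : H ≤ T) (hH' : H' ≤ G) (hdisj : Disjoint (T \ H) H')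
    (hconn : (T \ H ⊔ H').Connected) (hcard : H'.edgeSet.ncard ≤ H.edgeSet.ncard) :
    treeWeight H w ≤ treeWeight H' w := by
  obtain ⟨⟨hTG, hTconn, hTacyc⟩, hmin⟩ := hT
  have hsplit : T \ H ⊔ H = T := sdiff_sup_cancel hH
  have hcard' : (T \ H ⊔ H').edgeSet.ncard ≤ T.edgeSet.ncard := by
    conv_rhs => rw [← hsplit]
    rw [ncard_edgeSet_sup_of_disjoint hdisj,
      ncard_edgeSet_sup_of_disjoint disjoint_sdiff_self_left]
    omega
  have htree : IsSpanningTree G (T \ H ⊔ H') :=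
    ⟨sup_le (sdiff_le.trans hTG) hH', hconn,
      (IsTree.of_connected_of_ncard_edgeSet_le ⟨hTconn, hTacyc⟩ hconn hcard').isAcyclic⟩
  have hle := hmin _ htree
  conv_lhs at hle => rw [← hsplit]
  rw [treeWeight_sup_of_disjoint disjoint_sdiff_self_left,
    treeWeight_sup_of_disjoint hdisj] at hle
  linarith

lemma weight_le_of_mem_edges_of_adj (hT : IsMinSpanningTree G w T) {x y : V} (hxy : G.Adj x y)
    {p : T.Walk x y} (hp : p.IsPath) {e : Sym2 V} (he : e ∈ p.edges) : w e ≤ w s(x, y) := by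
  by_cases hTxy : T.Adj x y
  · have hpe : p = Walk.cons hTxy Walk.nil :=
      congrArg Subtype.val ((hT.1.2.2.subsingleton_path x y).elim ⟨p, hp⟩ (Path.singleton hTxy))
    simp only [hpe, Walk.edges_cons, Walk.edges_nil, List.mem_singleton] at he
    rw [he]
  obtain ⟨a, b⟩ := e
  have hTab : T.Adj a b := p.adj_of_mem_edges he
  have hyx : (T ⊔ edge x y).Adj y x := Or.inr (by simp [edge_adj, hxy.ne'])
  have hcycle : (Walk.cons hyx (p.mapLe le_sup_left)).IsCycle := by
    rw [Walk.cons_isCycle_iff, Walk.edges_mapLe_eq_edges]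
    exact ⟨hp.mapLe _, fun h => hTxy (p.adj_of_mem_edges h).symm⟩
  have hconn : ((T ⊔ edge x y).deleteEdges {s(a, b)}).Connected := by
    refine (hT.1.2.1.mono le_sup_left).connected_delete_edge_of_not_isBridge fun hbr => ?_
    exact hbr.notMem_edges_of_isCycle hcycle (by simp [he])
  have hexch := hT.treeWeight_le_of_exchange (edge_le_iff _ |>.2 (Or.inr hTab))
    (edge_le_iff _ |>.2 (Or.inr hxy)) ((T.disjoint_edge.2 hTxy).mono_left sdiff_le)
    (hconn.mono (sup_sdiff.trans_le (sup_le_sup_left sdiff_le _)))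
    (by simp [edgeSet_edge_of_ne hTab.ne, edgeSet_edge_of_ne hxy.ne])
  rwa [treeWeight_edge hTab.ne, treeWeight_edge hxy.ne] at hexch

lemma reachable_inf_percolate_of_adj (hT : IsMinSpanningTree G w T) {u : ℝ} {x y : V}
    (hxy : (percolate G w u).Adj x y) : (T ⊓ percolate G w u).Reachable x y := by
  obtain ⟨p, hp⟩ := hT.1.2.1.exists_isPath x y
  refine ⟨p.transfer _ fun e he => ?_⟩
  have heT : e ∈ T.edgeSet := p.edges_subset_edgeSet he
  rw [edgeSet_inf]
  exact ⟨heT, mem_edgeSet_percolate.2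
    ⟨edgeSet_mono hT.1.1 heT, (hT.weight_le_of_mem_edges_of_adj hxy.1 hp he).trans hxy.2⟩⟩

lemma connected_induce_percolate_supp (hT : IsMinSpanningTree G w T) {u : ℝ}
    (c : (percolate G w u).ConnectedComponent) : (T.induce c.supp).Connected := by
  refine c.connected_toSimpleGraph.of_adj_reachable ?_
  rintro ⟨x, hx⟩ ⟨y, hy⟩ hxy
  exact (c.reachable_induce_supp_of_le inf_le_right hx hy
    (hT.reachable_inf_percolate_of_adj hxy)).mono
    (show (T ⊓ percolate G w u).induce c.supp ≤ T.induce c.supp from fun _ _ h => h.1)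

lemma isSpanningTree_induce_percolate_supp (hT : IsMinSpanningTree G w T) {u : ℝ}
    (c : (percolate G w u).ConnectedComponent) :
    IsSpanningTree (G.induce c.supp) (T.induce c.supp) :=
  ⟨fun _ _ h => hT.1.1 h, hT.connected_induce_percolate_supp c, hT.1.2.2.induce _⟩

/-- Replacing `T[s]` inside `T` by a spanning tree `T''` of `G[s]` keeps the graph connected:
every edge of `T` not inside `s` survives and `T''` reconnects `s`. -/
lemma treeWeight_induce_le (hT : IsMinSpanningTree G w T) {s : Set V}
    (hs : IsSpanningTree (G.induce s) (T.induce s)) {T'' : SimpleGraph s}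
    (hT'' : IsSpanningTree (G.induce s) T'') :
    treeWeight (T.induce s) (fun e => w (e.map (↑))) ≤
      treeWeight T'' (fun e => w (e.map (↑))) := by
  rw [← treeWeight_spanningCoe, ← treeWeight_spanningCoe]
  refine hT.treeWeight_le_of_exchange (spanningCoe_induce_le _ _)
    ((map_le_iff_le_comap _ _ _).2 hT''.1) (disjoint_sdiff_spanningCoe_induce _ _) ?_ ?_
  · refine hT.1.2.1.of_adj_reachable fun a b hab => ?_
    by_cases hin : a ∈ s ∧ b ∈ s
    · exact ((hT''.2.1 ⟨a, hin.1⟩ ⟨b, hin.2⟩).map (Embedding.spanningCoe T'').toHom).mono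
        le_sup_right
    · refine Adj.reachable (Or.inl ⟨hab, fun hin' => hin ?_⟩)
      obtain ⟨a', b', -, rfl, rfl⟩ := (map_adj _ _ _ _).1 hin'
      exact ⟨a'.2, b'.2⟩
  · rw [ncard_edgeSet_spanningCoe, ncard_edgeSet_spanningCoe,
      IsTree.ncard_edgeSet_eq ⟨hT''.2.1, hT''.2.2⟩ ⟨hs.2.1, hs.2.2⟩]

lemma induce_percolate_supp (hT : IsMinSpanningTree G w T) {u : ℝ}
    (c : (percolate G w u).ConnectedComponent) :
    IsMinSpanningTree (G.induce c.supp) (fun e => w (e.map (↑))) (T.induce c.supp) :=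
  ⟨hT.isSpanningTree_induce_percolate_supp c, fun _ hT'' =>
    hT.treeWeight_induce_le (hT.isSpanningTree_induce_percolate_supp c) hT''⟩

end IsMinSpanningTree

end

theorem mst_restricted_to_percolation_component_general {V : Type*} [Fintype V]
    (G : SimpleGraph V)
    (w : Sym2 V → ℝ)
    (T : SimpleGraph V) (hT : IsSpanningTree G T)
    (hmin : ∀ T' : SimpleGraph V, IsSpanningTree G T' →
      treeWeight T w ≤ treeWeight T' w)
    (u : ℝ) (c : (percolate G w u).ConnectedComponent) :
    IsSpanningTree (G.induce c.supp) (T.induce c.supp) ∧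
      ∀ T'' : SimpleGraph c.supp, IsSpanningTree (G.induce c.supp) T'' →
        treeWeight (T.induce c.supp) (fun e => w (e.map (↑))) ≤
          treeWeight T'' (fun e => w (e.map (↑))) :=
  IsMinSpanningTree.induce_percolate_supp ⟨hT, hmin⟩ c

/-- The restriction of the MST of `(G, w)` to a connected component `C` of the percolation
graph `G^u` is a spanning tree of the induced subgraph `G[C]`, and it is the minimal
spanning tree of `G[C]` for the restricted weights. -/
theorem mst_restricted_to_percolation_component {V : Type*} [Fintype V]
    (G : SimpleGraph V) (hG : G.Connected)
    (w : Sym2 V → ℝ) (hw : Set.InjOn w G.edgeSet)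
    (T : SimpleGraph V) (hT : IsSpanningTree G T)
    (hmin : ∀ T' : SimpleGraph V, IsSpanningTree G T' →
      treeWeight T w ≤ treeWeight T' w)
    (u : ℝ) (c : (percolate G w u).ConnectedComponent) :
    IsSpanningTree (G.induce c.supp) (T.induce c.supp) ∧
      ∀ T'' : SimpleGraph c.supp, IsSpanningTree (G.induce c.supp) T'' →
        treeWeight (T.induce c.supp) (fun e => w (e.map (↑))) ≤
          treeWeight T'' (fun e => w (e.map (↑))) :=
  mst_restricted_to_percolation_component_general G w T hT hmin u c
end

section
/- For every r ∈ ℕ there exists a constant c > 0 (depending only on r) with the following property. Let G = (V, E) be a finite simple graph of maximum degree at most r, and let (Γ_e)_{e ∈ E} be independent Exponential(1) random variables. Then for every integer m ≥ 1, the probability that G contains a self-avoiding path P with at least m edges such that ∑_{e ∈ P} Γ_e ≤ c·|P| (where |P| is the number of edges of P) is at most |V|·e^{−m}. -/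
/-!
By a Chernoff bound, the `n` i.i.d. Exponential(1) weights along a fixed path sum to at most `c n`
with probability at most `(e c)ⁿ`. A vertex starts at most `rⁿ` walks of length `n` and a path
has fewer than `|V|` edges, so a union bound over the first vertex and the length `m ≤ n < |V|`
bounds the probability by `|V| ∑_{n ≥ m} (r e c)ⁿ`, which is at most `|V| e^{-m}` as soon as
`r e c ≤ e^{-2}`.
-/

open MeasureTheory ProbabilityTheory Real Finset

namespace ProbabilityTheory

theorem lintegral_exp_mul_expMeasure {r t : ℝ} (hr : 0 < r) (ht : t < r) :
    ∫⁻ x, ENNReal.ofReal (exp (t * x)) ∂expMeasure r = ENNReal.ofReal (r / (r - t)) := by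
  have hdensity : ∀ x, exponentialPDF r x * ENNReal.ofReal (exp (t * x)) =
      (Set.Ici 0).indicator (fun x => ENNReal.ofReal (r * exp ((t - r) * x))) x := by
    intro x
    rcases le_or_gt 0 x with hx | hx
    · rw [exponentialPDF_of_nonneg hx, Set.indicator_of_mem (Set.mem_Ici.2 hx),
        ← ENNReal.ofReal_mul (by positivity), mul_assoc, ← exp_add]
      ring_nf
    · rw [exponentialPDF_of_neg hx, Set.indicator_of_notMem (by simpa using hx), zero_mul]
  have hint : IntegrableOn (fun x => r * exp ((t - r) * x)) (Set.Ioi 0) := by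
    have h := (exp_neg_integrableOn_Ioi 0 (sub_pos.2 ht)).const_mul r
    rw [neg_sub] at h
    exact h
  rw [show expMeasure r = volume.withDensity (exponentialPDF r) from rfl,
    lintegral_withDensity_eq_lintegral_mul _ (f := exponentialPDF r)
      (measurable_exponentialPDFReal r).ennreal_ofReal (by fun_prop)]
  simp only [Pi.mul_apply]
  rw [lintegral_congr hdensity, lintegral_indicator measurableSet_Ici,
    ← Measure.restrict_congr_set Ioi_ae_eq_Ici,
    ← ofReal_integral_eq_lintegral_ofReal hint (ae_of_all _ fun x => by positivity),
    integral_const_mul, integral_exp_mul_Ioi (by linarith), mul_zero, exp_zero, neg_div, ← div_neg, neg_sub, mul_one_div]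

theorem integrable_exp_mul_expMeasure {r t : ℝ} (hr : 0 < r) (ht : t < r) :
    Integrable (fun x => exp (t * x)) (expMeasure r) := by
  refine ⟨by fun_prop, ?_⟩
  rw [hasFiniteIntegral_iff_ofReal (ae_of_all _ fun x => (exp_pos _).le),
    lintegral_exp_mul_expMeasure hr ht]
  exact ENNReal.ofReal_lt_top

theorem mgf_id_expMeasure {r t : ℝ} (hr : 0 < r) (ht : t < r) :
    mgf id (expMeasure r) t = r / (r - t) := by
  rw [mgf, integral_eq_lintegral_of_nonneg_ae (ae_of_all _ fun x => (exp_pos _).le) (by fun_prop)]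
  simp only [id]
  rw [lintegral_exp_mul_expMeasure hr ht, ENNReal.toReal_ofReal (div_pos hr (by linarith)).le]

theorem measure_sum_le_mul_card_le_of_expMeasure {ι Ω : Type*} [MeasurableSpace Ω]
    {P : Measure Ω} [IsProbabilityMeasure P] {X : ι → Ω → ℝ} (hmeas : ∀ i, Measurable (X i))
    (hindep : iIndepFun X P) {r : ℝ} (hr : 0 < r) (hdist : ∀ i, P.map (X i) = expMeasure r)
    {c : ℝ} (hc : 0 < c) (s : Finset ι) :
    P {ω | ∑ i ∈ s, X i ω ≤ c * #s} ≤ ENNReal.ofReal ((exp 1 * r * c) ^ #s) := by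
  have ht : -c⁻¹ < r := by linarith [inv_pos.2 hc]
  have hint : ∀ i, Integrable (fun ω => exp (-c⁻¹ * X i ω)) P := fun i => by
    have h := integrable_exp_mul_expMeasure hr ht
    rw [← hdist i] at h
    exact h.comp_measurable (hmeas i)
  have hmgf : ∀ i, mgf (X i) P (-c⁻¹) = r / (r + c⁻¹) := fun i => by
    rw [← mgf_id_map (hmeas i).aemeasurable, hdist i, mgf_id_expMeasure hr ht, sub_neg_eq_add]
  have hchernoff := measure_le_le_exp_mul_mgf (X := ∑ i ∈ s, X i) (c * #s)
    (neg_nonpos.2 (inv_pos.2 hc).le) (hindep.integrable_exp_mul_sum hmeas fun i _ => hint i)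
  rw [hindep.mgf_sum hmeas, prod_congr rfl fun i _ => hmgf i, prod_const] at hchernoff
  simp only [Finset.sum_apply] at hchernoff
  rw [← ofReal_measureReal]
  refine ENNReal.ofReal_le_ofReal (hchernoff.trans ?_)
  calc exp (- -c⁻¹ * (c * #s)) * (r / (r + c⁻¹)) ^ #s = (exp 1 * (r / (r + c⁻¹))) ^ #s := by
        rw [neg_neg, inv_mul_cancel_left₀ hc.ne', mul_pow, exp_one_pow]
    _ ≤ (exp 1 * r * c) ^ #s := by
        rw [mul_assoc]
        gcongr
        rw [div_le_iff₀ (by positivity), mul_add, mul_inv_cancel_right₀ hc.ne']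
        nlinarith [mul_pos (mul_pos hr hc) hr]

end ProbabilityTheory

theorem sum_Ico_pow_le_exp_neg {a : ℝ} (h0 : 0 ≤ a) (ha : a ≤ exp (-2)) {m : ℕ} (hm : 1 ≤ m)
    (N : ℕ) : ∑ n ∈ Ico m N, a ^ n ≤ exp (-m) := by
  set u := exp (-1) with hu_def
  have hu0 : 0 < u := exp_pos _
  have hu : u ≤ 1 / 2 := by
    rw [hu_def, exp_neg, inv_le_comm₀ (exp_pos 1) (by norm_num)]
    linarith [add_one_le_exp (1 : ℝ)]
  have hexp2 : exp (-2) = u ^ 2 := by rw [hu_def, ← exp_nat_mul]; norm_num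
  have hexpm : exp (-m) = u ^ m := by rw [hu_def, ← exp_nat_mul]; ring_nf
  have hum : u ^ m ≤ u := pow_le_of_le_one hu0.le (by linarith) (by omega)
  rw [hexp2] at ha
  rw [hexpm]
  calc ∑ n ∈ Ico m N, a ^ n ≤ a ^ m / (1 - a) := geom_sum_Ico_le_of_lt_one h0 (by nlinarith)
    _ ≤ (u ^ 2) ^ m / (1 - u ^ 2) := by gcongr; nlinarith
    _ ≤ u ^ m := by
        rw [div_le_iff₀ (by nlinarith), ← pow_mul, mul_comm 2, pow_mul, sq]
        exact mul_le_mul_of_nonneg_left (hum.trans (by nlinarith)) (pow_nonneg hu0.le m)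

namespace SimpleGraph

theorem sum_card_finsetWalkLength_le_pow {V : Type*} [Fintype V] [DecidableEq V]
    {G : SimpleGraph V} [G.LocallyFinite] {r : ℕ} (hdeg : ∀ v, G.degree v ≤ r) (n : ℕ) (u : V) :
    ∑ v, #(G.finsetWalkLength n u v) ≤ r ^ n := by
  induction n generalizing u with
  | zero =>
    rw [sum_eq_single u (fun v _ huv => by simp [finsetWalkLength, huv.symm]) (by simp)]
    simp [finsetWalkLength]
  | succ n ih =>
    calc ∑ v, #(G.finsetWalkLength (n + 1) u v)
        ≤ ∑ v, ∑ w : G.neighborSet u, #(G.finsetWalkLength n w v) :=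
          sum_le_sum fun v _ => card_biUnion_le.trans_eq (by simp)
      _ = ∑ w : G.neighborSet u, ∑ v, #(G.finsetWalkLength n w v) := sum_comm
      _ ≤ G.degree u * r ^ n := by
          simpa only [card_univ, card_neighborSet_eq_degree, smul_eq_mul] using
            sum_le_card_nsmul (univ : Finset (G.neighborSet u)) _ _ fun w _ => ih w
      _ ≤ r ^ (n + 1) := by
          rw [pow_succ']
          exact Nat.mul_le_mul_right _ (hdeg u)

theorem Walk.IsTrail.measure_weight_le {V Ω : Type*} {G : SimpleGraph V} {x y : V}
    {p : G.Walk x y} (hp : p.IsTrail) [MeasurableSpace Ω] {P : Measure Ω}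
    [IsProbabilityMeasure P] {Γ : Sym2 V → Ω → ℝ} (hmeas : ∀ e, Measurable (Γ e))
    (hindep : iIndepFun (fun e : G.edgeSet => Γ e) P)
    (hdist : ∀ e ∈ G.edgeSet, P.map (Γ e) = expMeasure 1) {c : ℝ} (hc : 0 < c) :
    P {ω | (p.edges.map fun e => Γ e ω).sum ≤ c * p.length} ≤
      ENNReal.ofReal ((exp 1 * c) ^ p.length) := by
  classical
  have hsub : ∀ e ∈ p.edges.toFinset, e ∈ G.edgeSet := fun e he =>
    p.edges_subset_edgeSet (List.mem_toFinset.1 he)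
  set s : Finset G.edgeSet := p.edges.toFinset.subtype (· ∈ G.edgeSet)
  have hsum : ∀ ω, ∑ e ∈ s, Γ e ω = (p.edges.map fun e => Γ e ω).sum := fun ω => by
    rw [sum_subtype_of_mem (fun e => Γ e ω) hsub, List.sum_toFinset _ hp.edges_nodup]
  have hcard : #s = p.length := by
    rw [card_subtype, filter_true_of_mem hsub, List.toFinset_card_of_nodup hp.edges_nodup,
      p.length_edges]
  simpa only [hsum, hcard, mul_one] using measure_sum_le_mul_card_le_of_expMeasure
    (X := fun e : G.edgeSet => Γ e) (fun e => hmeas e) hindep one_pos (fun e => hdist e e.2) hc s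

theorem measure_exists_path_weight_le {V Ω : Type*} [Fintype V] {G : SimpleGraph V}
    [DecidableRel G.Adj] {r : ℕ} (hdeg : ∀ v, G.degree v ≤ r) [MeasurableSpace Ω]
    {P : Measure Ω} [IsProbabilityMeasure P] {Γ : Sym2 V → Ω → ℝ}
    (hmeas : ∀ e, Measurable (Γ e)) (hindep : iIndepFun (fun e : G.edgeSet => Γ e) P)
    (hdist : ∀ e ∈ G.edgeSet, P.map (Γ e) = expMeasure 1) {c : ℝ} (hc : 0 < c) (x : V) (n : ℕ) :
    P {ω | ∃ (y : V) (p : G.Walk x y), p.IsPath ∧ p.length = n ∧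
        (p.edges.map fun e => Γ e ω).sum ≤ c * p.length} ≤
      ENNReal.ofReal ((r * (exp 1 * c)) ^ n) := by
  classical
  set W : Finset (Σ y, G.Walk x y) := univ.sigma fun y => G.finsetWalkLength n x y
  have hsub : {ω | ∃ (y : V) (p : G.Walk x y), p.IsPath ∧ p.length = n ∧
        (p.edges.map fun e => Γ e ω).sum ≤ c * p.length} ⊆
      ⋃ q ∈ W.filter (·.2.IsTrail), {ω | (q.2.edges.map fun e => Γ e ω).sum ≤ c * q.2.length} := by
    rintro ω ⟨y, p, hp, rfl, hweight⟩
    exact Set.mem_iUnion₂.2 ⟨⟨y, p⟩,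
      mem_filter.2 ⟨mem_sigma.2 ⟨mem_univ y, mem_finsetWalkLength_iff.2 rfl⟩,
        hp.isTrail⟩, hweight⟩
  have hcard : (#W : ENNReal) ≤ (r ^ n : ℕ) := by
    rw [card_sigma]
    exact_mod_cast G.sum_card_finsetWalkLength_le_pow hdeg n x
  calc _ ≤ _ := measure_mono hsub
    _ ≤ ∑ q ∈ W.filter (·.2.IsTrail), ENNReal.ofReal ((exp 1 * c) ^ n) := by
        refine (measure_biUnion_finset_le _ _).trans (sum_le_sum fun q hq => ?_)
        obtain ⟨hqW, hq⟩ := mem_filter.1 hq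
        have hlen : q.2.length = n := mem_finsetWalkLength_iff.1 (mem_sigma.1 hqW).2
        simpa only [hlen] using hq.measure_weight_le hmeas hindep hdist hc
    _ ≤ #W * ENNReal.ofReal ((exp 1 * c) ^ n) := by
        rw [sum_const, nsmul_eq_mul]
        gcongr
        exact filter_subset _ _
    _ ≤ (r ^ n : ℕ) * ENNReal.ofReal ((exp 1 * c) ^ n) := by gcongr
    _ = ENNReal.ofReal ((r * (exp 1 * c)) ^ n) := by
        rw [← ENNReal.ofReal_natCast, ← ENNReal.ofReal_mul (by positivity), Nat.cast_pow,
          ← mul_pow]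

end SimpleGraph

/-- For every `r` there is a constant `c > 0` such that for every finite simple graph `G`
with maximum degree at most `r` and i.i.d. Exponential(1) edge weights `Γ`, the probability
that `G` contains a self-avoiding path `P` with at least `m` edges and total weight at most
`c·|P|` is at most `|V|·e^{-m}`. -/
theorem exponential_weight_self_avoiding_path_bound :
    ∀ r : ℕ, ∃ c : ℝ, 0 < c ∧
      ∀ (V : Type) [Fintype V] (G : SimpleGraph V) [DecidableRel G.Adj],
        (∀ v : V, G.degree v ≤ r) →
        ∀ (Ω : Type) [MeasurableSpace Ω] (P : Measure Ω) [IsProbabilityMeasure P]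
          (Γ : Sym2 V → Ω → ℝ),
          (∀ e : Sym2 V, Measurable (Γ e)) →
          iIndepFun
            (fun e : G.edgeSet => Γ e) P →
          (∀ e ∈ G.edgeSet, P.map (Γ e) = expMeasure 1) →
          ∀ m : ℕ, 1 ≤ m →
            P {ω | ∃ (x y : V) (p : G.Walk x y), p.IsPath ∧ m ≤ p.length ∧
                (p.edges.map fun e => Γ e ω).sum ≤ c * p.length} ≤
              ENNReal.ofReal ((Fintype.card V : ℝ) * Real.exp (-(m : ℝ))) := by
  intro r
  obtain ⟨c, hc, hratio⟩ : ∃ c : ℝ, 0 < c ∧ r * (exp 1 * c) ≤ exp (-2) := by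
    refine ⟨exp (-3) / (r + 1), by positivity, ?_⟩
    rw [mul_div_assoc', ← exp_add, mul_div_left_comm, show (1 : ℝ) + -3 = -2 by norm_num]
    exact mul_le_of_le_one_right (exp_pos _).le ((div_le_one (by positivity)).2 (by linarith))
  refine ⟨c, hc, fun V _ G _ hdeg Ω _ P _ Γ hmeas hindep hdist m hm => ?_⟩
  have hsub : {ω | ∃ (x y : V) (p : G.Walk x y), p.IsPath ∧ m ≤ p.length ∧
        (p.edges.map fun e => Γ e ω).sum ≤ c * p.length} ⊆
      ⋃ x, ⋃ n ∈ Ico m (Fintype.card V), {ω | ∃ (y : V) (p : G.Walk x y), p.IsPath ∧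
        p.length = n ∧ (p.edges.map fun e => Γ e ω).sum ≤ c * p.length} := by
    rintro ω ⟨x, y, p, hp, hmp, hweight⟩
    exact Set.mem_iUnion.2 ⟨x, Set.mem_iUnion₂.2
      ⟨p.length, mem_Ico.2 ⟨hmp, hp.length_lt⟩, y, p, hp, rfl, hweight⟩⟩
  calc _ ≤ _ := measure_mono hsub
    _ ≤ ∑ x : V, ∑ n ∈ Ico m (Fintype.card V), ENNReal.ofReal ((r * (exp 1 * c)) ^ n) :=
        (measure_iUnion_fintype_le _ _).trans <| sum_le_sum fun x _ =>
          (measure_biUnion_finset_le _ _).trans <| sum_le_sum fun n _ =>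
            SimpleGraph.measure_exists_path_weight_le hdeg hmeas hindep hdist hc x n
    _ ≤ ∑ _x : V, ENNReal.ofReal (exp (-m)) := by
        refine sum_le_sum fun x _ => ?_
        rw [← ENNReal.ofReal_sum_of_nonneg fun n _ => by positivity]
        exact ENNReal.ofReal_le_ofReal (sum_Ico_pow_le_exp_neg (by positivity) hratio hm _)
    _ = ENNReal.ofReal (Fintype.card V * exp (-m)) := by
        rw [sum_const, card_univ, nsmul_eq_mul, ← ENNReal.ofReal_natCast,
          ← ENNReal.ofReal_mul (by positivity)]
end

section
/- Let n ≥ 1 and for 1 ≤ i ≤ j ≤ n let x_{ij} and x'_{ij} be nonnegative integers with x'_{ij} ≤ x_{ij}; extend by symmetry x_{ji} = x_{ij}, x'_{ji} = x'_{ij}. For i ∈ [n] set d_i = 2x_{ii} + ∑_{j ≠ i} x_{ij} and d'_i = 2x'_{ii} + ∑_{j ≠ i} x'_{ij}, and let ℓ = ∑_i d_i, ℓ' = ∑_i d'_i, m = (ℓ − ℓ')/2 (note ℓ and ℓ' are automatically even). Then the following identity holds in ℚ (with the convention (−1)!! = 1): [1/(ℓ−1)!!] · [∏_i d_i! / (∏_i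 2^{x_{ii}} ∏_{i ≤ j} x_{ij}!)] · [∏_{i ≤ j} C(x_{ij}, x'_{ij}) / C(ℓ/2, m)] = [∏_i C(d_i, d'_i) / C(ℓ, ℓ')] · [1/(ℓ'−1)!!] · [∏_i d'_i! / (∏_i 2^{x'_{ii}} ∏_{i ≤ j} x'_{ij}!)] · [1/(ℓ−ℓ'−1)!!] · [∏_i (d_i − d'_i)! / (∏_i 2^{x_{ii}−x'_{ii}} ∏_{i ≤ j} (x_{ij} − x'_{ij})!)]. -/
private lemma cm_fact_two_mul_eq (k : ℕ) :
    (2*k).factorial = 2^k * k.factorial * (2*k - 1).doubleFactorial := by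
  cases k with
  | zero => simp
  | succ k =>
      have h1 : 2*(k+1) = (2*k+1)+1 := by ring
      have h2 : 2*(k+1) - 1 = 2*k+1 := by omega
      rw [h2, h1, Nat.factorial_eq_mul_doubleFactorial, ← h1, Nat.doubleFactorial_two_mul]

private lemma cm_dfq (k : ℕ) :
    (((2*k - 1).doubleFactorial : ℕ) : ℚ) = (2*k).factorial / (2^k * k.factorial) := by
  have h : (((2*k).factorial : ℕ) : ℚ) = 2^k * k.factorial * ((2*k - 1).doubleFactorial : ℕ) := by
    exact_mod_cast congrArg (Nat.cast : ℕ → ℚ) (cm_fact_two_mul_eq k)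
  rw [eq_div_iff (by positivity)]
  push_cast at h ⊢
  linarith

private lemma cm_even_sym_sum (n : ℕ) (x' : Fin n → Fin n → ℕ)
    (hx' : ∀ i j, x' i j = x' j i) :
    2 ∣ ∑ i, ∑ j ∈ Finset.univ.erase i, x' i j := by
  rw [← ZMod.natCast_eq_zero_iff]
  push_cast
  have key : ∑ p ∈ (Finset.univ ×ˢ Finset.univ).filter
      (fun p : Fin n × Fin n => p.1 ≠ p.2), ((x' p.1 p.2 : ZMod 2)) = 0 := by
    refine Finset.sum_involution (fun p _ => p.swap) ?_ ?_ ?_ ?_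
    · intro p hp
      rw [Prod.fst_swap, Prod.snd_swap, ← hx']
      exact CharTwo.add_self_eq_zero _
    · intro p hp h
      simp only [Finset.mem_filter] at hp
      simp [Prod.ext_iff, hp.2, Ne.symm hp.2]
    · intro p hp
      simp only [Finset.mem_filter, Finset.mem_product] at hp ⊢
      exact ⟨⟨Finset.mem_univ _, Finset.mem_univ _⟩, fun h => hp.2 h.symm⟩
    · intro p hp; rfl
  rw [← key, Finset.sum_filter, Finset.sum_product]
  refine Finset.sum_congr rfl fun i _ => ?_
  rw [show Finset.univ.erase i = Finset.univ.filter (fun j => ¬ i = j) from by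
    ext j; simp [eq_comm], Finset.sum_filter]

/-- The configuration-model identity: the two ways of computing the joint law of a
configuration-model multigraph together with a uniformly removed set of `m` edges agree.
Here `x i j` is the number of edges between `i` and `j` (`x i i` the number of loops at
`i`), `x'` the corresponding counts after removal, `d, d'` the degrees, `ℓ, ℓ'` the total
degrees and `m` the number of removed edges. -/
theorem configuration_model_removal_identity (n : ℕ) (hn : 1 ≤ n)
    (x x' : Fin n → Fin n → ℕ)
    (hx : ∀ i j, x i j = x j i) (hx' : ∀ i j, x' i j = x' j i)
    (hle : ∀ i j, x' i j ≤ x i j)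
    (d d' : Fin n → ℕ)
    (hd : ∀ i, d i = 2 * x i i + ∑ j ∈ Finset.univ.erase i, x i j)
    (hd' : ∀ i, d' i = 2 * x' i i + ∑ j ∈ Finset.univ.erase i, x' i j)
    (ℓ ℓ' m : ℕ) (hℓ : ℓ = ∑ i, d i) (hℓ' : ℓ' = ∑ i, d' i)
    (hm : ℓ = ℓ' + 2 * m) :
    (1 / ((Nat.doubleFactorial (ℓ - 1) : ℕ) : ℚ)) *
      (((∏ i, Nat.factorial (d i) : ℕ) : ℚ) /
        (((∏ i, 2 ^ (x i i) : ℕ) : ℚ) *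
          ((∏ p ∈ Finset.univ.filter (fun p : Fin n × Fin n => p.1 ≤ p.2),
            Nat.factorial (x p.1 p.2) : ℕ) : ℚ))) *
      (((∏ p ∈ Finset.univ.filter (fun p : Fin n × Fin n => p.1 ≤ p.2),
            Nat.choose (x p.1 p.2) (x' p.1 p.2) : ℕ) : ℚ) /
        ((Nat.choose (ℓ / 2) m : ℕ) : ℚ)) =
    (((∏ i, Nat.choose (d i) (d' i) : ℕ) : ℚ) / ((Nat.choose ℓ ℓ' : ℕ) : ℚ)) *
      (1 / ((Nat.doubleFactorial (ℓ' - 1) : ℕ) : ℚ)) *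
      (((∏ i, Nat.factorial (d' i) : ℕ) : ℚ) /
        (((∏ i, 2 ^ (x' i i) : ℕ) : ℚ) *
          ((∏ p ∈ Finset.univ.filter (fun p : Fin n × Fin n => p.1 ≤ p.2),
            Nat.factorial (x' p.1 p.2) : ℕ) : ℚ))) *
      (1 / ((Nat.doubleFactorial (ℓ - ℓ' - 1) : ℕ) : ℚ)) *
      (((∏ i, Nat.factorial (d i - d' i) : ℕ) : ℚ) /
        (((∏ i, 2 ^ (x i i - x' i i) : ℕ) : ℚ) *
          ((∏ p ∈ Finset.univ.filter (fun p : Fin n × Fin n => p.1 ≤ p.2),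
            Nat.factorial (x p.1 p.2 - x' p.1 p.2) : ℕ) : ℚ))) := by
  classical
  have hdle : ∀ i, d' i ≤ d i := fun i => by
    rw [hd, hd']
    exact Nat.add_le_add (Nat.mul_le_mul_left _ (hle i i))
      (Finset.sum_le_sum fun j _ => hle i j)
  have hev : 2 ∣ ℓ' := by
    rw [hℓ']
    have hsplit : ∑ i, d' i
        = 2 * (∑ i, x' i i) + ∑ i, ∑ j ∈ Finset.univ.erase i, x' i j := by
      rw [Finset.mul_sum, ← Finset.sum_add_distrib]
      exact Finset.sum_congr rfl fun i _ => hd' i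
    rw [hsplit]
    exact dvd_add (Dvd.intro _ rfl) (cm_even_sym_sum n x' hx')
  obtain ⟨L', hL'⟩ := hev
  have hℓeq : ℓ = 2 * (L' + m) := by omega
  have hdiv : ℓ / 2 = L' + m := by omega
  have hsub : ℓ - ℓ' = 2 * m := by omega
  rw [hdiv, hsub, hℓeq, hL']
  rw [Nat.cast_choose ℚ (Nat.le_add_left m L'),
    Nat.cast_choose ℚ (by omega : 2*L' ≤ 2*(L'+m)),
    show L' + m - m = L' from by omega,
    show 2*(L'+m) - 2*L' = 2*m from by omega,
    cm_dfq (L'+m), cm_dfq L', cm_dfq m]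
  have hPd : ((∏ i, Nat.choose (d i) (d' i) : ℕ) : ℚ)
      = ((∏ i, Nat.factorial (d i) : ℕ) : ℚ) /
        (((∏ i, Nat.factorial (d' i) : ℕ) : ℚ) *
          ((∏ i, Nat.factorial (d i - d' i) : ℕ) : ℚ)) := by
    push_cast
    rw [← Finset.prod_mul_distrib, ← Finset.prod_div_distrib]
    exact Finset.prod_congr rfl fun i _ => Nat.cast_choose ℚ (hdle i)
  have hPx : ((∏ p ∈ Finset.univ.filter (fun p : Fin n × Fin n => p.1 ≤ p.2),
        Nat.choose (x p.1 p.2) (x' p.1 p.2) : ℕ) : ℚ)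
      = ((∏ p ∈ Finset.univ.filter (fun p : Fin n × Fin n => p.1 ≤ p.2),
          Nat.factorial (x p.1 p.2) : ℕ) : ℚ) /
        (((∏ p ∈ Finset.univ.filter (fun p : Fin n × Fin n => p.1 ≤ p.2),
          Nat.factorial (x' p.1 p.2) : ℕ) : ℚ) *
          ((∏ p ∈ Finset.univ.filter (fun p : Fin n × Fin n => p.1 ≤ p.2),
          Nat.factorial (x p.1 p.2 - x' p.1 p.2) : ℕ) : ℚ)) := by
    push_cast
    rw [← Finset.prod_mul_distrib, ← Finset.prod_div_distrib]
    exact Finset.prod_congr rfl fun p _ => Nat.cast_choose ℚ (hle p.1 p.2)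
  have hT : ((∏ i, 2 ^ (x i i) : ℕ) : ℚ)
      = ((∏ i, 2 ^ (x' i i) : ℕ) : ℚ) * ((∏ i, 2 ^ (x i i - x' i i) : ℕ) : ℚ) := by
    have h : (∏ i, 2 ^ (x i i)) = (∏ i, 2 ^ (x' i i)) * ∏ i, 2 ^ (x i i - x' i i) := by
      rw [← Finset.prod_mul_distrib]
      refine Finset.prod_congr rfl fun i _ => ?_
      rw [← pow_add, Nat.add_sub_cancel' (hle i i)]
    exact_mod_cast congrArg (Nat.cast : ℕ → ℚ) h
  rw [hPd, hPx, hT]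
  have hfac : ∀ k : ℕ, ((Nat.factorial k : ℕ) : ℚ) ≠ 0 := fun k =>
    Nat.cast_ne_zero.mpr (Nat.factorial_pos k).ne'
  have hprodfac : ∀ (s : Finset (Fin n × Fin n)) (f : Fin n × Fin n → ℕ),
      ((∏ p ∈ s, Nat.factorial (f p) : ℕ) : ℚ) ≠ 0 := fun s f =>
    Nat.cast_ne_zero.mpr (Finset.prod_ne_zero_iff.mpr fun p _ => (Nat.factorial_pos _).ne')
  have hprodfac' : ∀ f : Fin n → ℕ, ((∏ i, Nat.factorial (f i) : ℕ) : ℚ) ≠ 0 := fun f =>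
    Nat.cast_ne_zero.mpr (Finset.prod_ne_zero_iff.mpr fun i _ => (Nat.factorial_pos _).ne')
  have hprodpow : ∀ f : Fin n → ℕ, ((∏ i, 2 ^ (f i) : ℕ) : ℚ) ≠ 0 := fun f =>
    Nat.cast_ne_zero.mpr (Finset.prod_ne_zero_iff.mpr fun i _ => (pow_pos two_pos _).ne')
  have n1 := hfac (L' + m)
  have n2 := hfac L'
  have n3 := hfac m
  have n4 := hfac (2 * (L' + m))
  have n5 := hfac (2 * L')
  have n6 := hfac (2 * m)
  have n7 := hprodfac' d'
  have n8 := hprodfac' (fun i => d i - d' i)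
  have n9 := hprodpow (fun i => x' i i)
  have n10 := hprodpow (fun i => x i i - x' i i)
  have n11 := hprodfac (Finset.univ.filter (fun p : Fin n × Fin n => p.1 ≤ p.2))
    (fun p => x p.1 p.2)
  have n12 := hprodfac (Finset.univ.filter (fun p : Fin n × Fin n => p.1 ≤ p.2))
    (fun p => x' p.1 p.2)
  have n13 := hprodfac (Finset.univ.filter (fun p : Fin n × Fin n => p.1 ≤ p.2))
    (fun p => x p.1 p.2 - x' p.1 p.2)
  field_simp
  ring
end

section
/- Let N ≥ 1 and 0 ≤ k ≤ N, and let S be a uniformly random k-element subset of a finite set X with |X| = N. Then for any disjoint nonempty subsets A, B ⊆ X, the events {A ⊆ S} and {B ⊆ S} are negatively correlated: P(A ⊆ S and B ⊆ S) ≤ P(A ⊆ S) · P(B ⊆ S); equivalently, Cov(1{A ⊆ S}, 1{B ⊆ S}) ≤ 0. -/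
/-!
For a uniform `k`-subset `S` of an `n`-set, `P(A ⊆ S) = k^{(a)} / n^{(a)}` with `a = #A` and
`x^{(a)}` the falling factorial. Splitting `k^{(a+b)} = k^{(a)} (k-a)^{(b)}` and likewise for `n`
shows `P(A ∪ B ⊆ S) = P(A ⊆ S) · (k-a)^{(b)} / (n-a)^{(b)}`, and the last ratio is at most
`k^{(b)} / n^{(b)} = P(B ⊆ S)` factor by factor, because `(k-a-i)/(n-a-i) ≤ (k-i)/(n-i)` when `k ≤ n`.
-/

open Finset

namespace Nat

theorem sub_sub_mul_sub_le_sub_mul_sub_sub {k n : ℕ} (hkn : k ≤ n) (a i : ℕ) :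
    (k - a - i) * (n - i) ≤ (k - i) * (n - a - i) := by
  rcases le_or_gt k (a + i) with hk | hk
  · simp [show k - a - i = 0 by omega]
  · have hai : a + i ≤ n := by omega
    zify [hk.le, hai, show i ≤ k by omega, show i ≤ n by omega, Nat.sub_sub]
    nlinarith

theorem descFactorial_sub_mul_descFactorial_le {k n : ℕ} (hkn : k ≤ n) (a : ℕ) :
    ∀ b : ℕ, (k - a).descFactorial b * n.descFactorial b ≤
      k.descFactorial b * (n - a).descFactorial b
  | 0 => by simp
  | b + 1 => by
    simp only [descFactorial_succ]
    calc (k - a - b) * (k - a).descFactorial b * ((n - b) * n.descFactorial b)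
        = ((k - a - b) * (n - b)) * ((k - a).descFactorial b * n.descFactorial b) := by ring
      _ ≤ ((k - b) * (n - a - b)) * (k.descFactorial b * (n - a).descFactorial b) :=
        Nat.mul_le_mul (sub_sub_mul_sub_le_sub_mul_sub_sub hkn a b)
          (descFactorial_sub_mul_descFactorial_le hkn a b)
      _ = (k - b) * k.descFactorial b * ((n - a - b) * (n - a).descFactorial b) := by ring

theorem descFactorial_sub_div_le {k n : ℕ} (hkn : k ≤ n) (a b : ℕ) :
    ((k - a).descFactorial b : ℚ) / (n - a).descFactorial b ≤
      k.descFactorial b / n.descFactorial b := by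
  rcases Nat.eq_zero_or_pos ((n - a).descFactorial b) with h | h
  · rw [h, Nat.cast_zero, div_zero]
    positivity
  · have hn : 0 < n.descFactorial b := h.trans_le (descFactorial_le b (Nat.sub_le n a))
    rw [div_le_div_iff₀ (by exact_mod_cast h) (by exact_mod_cast hn)]
    exact_mod_cast descFactorial_sub_mul_descFactorial_le hkn a b

theorem descFactorial_add_div_le {k n : ℕ} (hkn : k ≤ n) (a b : ℕ) :
    (k.descFactorial (a + b) : ℚ) / n.descFactorial (a + b) ≤
      k.descFactorial a / n.descFactorial a * (k.descFactorial b / n.descFactorial b) := by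
  rw [← descFactorial_mul_descFactorial (Nat.le_add_right a b),
    ← descFactorial_mul_descFactorial (Nat.le_add_right a b), Nat.add_sub_cancel_left]
  push_cast
  rw [mul_div_mul_comm, mul_comm]
  exact mul_le_mul_of_nonneg_left (descFactorial_sub_div_le hkn a b) (by positivity)

end Nat

theorem card_filter_powersetCard_subset_div_choose {α : Type*} [DecidableEq α] {s t : Finset α}
    (hst : s ⊆ t) {k : ℕ} (hk : k ≤ #t) :
    (#{u ∈ t.powersetCard k | s ⊆ u} : ℚ) / (#t).choose k =
      k.descFactorial #s / (#t).descFactorial #s := by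
  rcases le_or_gt #s k with hsk | hks
  · have hnk : ((#t).choose k : ℚ) ≠ 0 := by exact_mod_cast (Nat.choose_pos hk).ne'
    have hns : (((#s).factorial * (#t).choose #s : ℕ) : ℚ) ≠ 0 := by
      exact_mod_cast (Nat.mul_pos (Nat.factorial_pos _) (Nat.choose_pos (hsk.trans hk))).ne'
    have hchoose : ((#t).choose k * k.choose #s : ℚ) = (#t).choose #s * (#t - #s).choose (k - #s) :=
      by exact_mod_cast Nat.choose_mul hsk
    rw [card_filter_powersetCard_subset s t k hst hsk, Nat.descFactorial_eq_factorial_mul_choose,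
      Nat.descFactorial_eq_factorial_mul_choose, div_eq_div_iff hnk hns]
    push_cast
    linear_combination -((#s).factorial : ℚ) * hchoose
  · have hempty : #{u ∈ t.powersetCard k | s ⊆ u} = 0 :=
      card_eq_zero.2 <| filter_eq_empty_iff.2 fun u hu hsu =>
        hks.not_ge ((card_le_card hsu).trans (mem_powersetCard.1 hu).2.le)
    rw [hempty, Nat.descFactorial_eq_zero_iff_lt.2 hks, Nat.cast_zero, zero_div, zero_div]

theorem uniform_subset_negative_correlation_general {X : Type*} [Fintype X] [DecidableEq X]
    (k : ℕ) (hk : k ≤ Fintype.card X)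
    (A B : Finset X) (hAB : Disjoint A B) :
    ((((Finset.univ : Finset X).powersetCard k).filter (fun s => A ⊆ s ∧ B ⊆ s)).card : ℚ) /
        (((Finset.univ : Finset X).powersetCard k).card : ℚ) ≤
      (((((Finset.univ : Finset X).powersetCard k).filter (fun s => A ⊆ s)).card : ℚ) /
          (((Finset.univ : Finset X).powersetCard k).card : ℚ)) *
        (((((Finset.univ : Finset X).powersetCard k).filter (fun s => B ⊆ s)).card : ℚ) /
          (((Finset.univ : Finset X).powersetCard k).card : ℚ)) := by
  rw [← card_univ (α := X)] at hk
  have hjoint : {s ∈ (univ : Finset X).powersetCard k | A ⊆ s ∧ B ⊆ s} =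
      {s ∈ (univ : Finset X).powersetCard k | A ∪ B ⊆ s} := by
    simp only [union_subset_iff]
  rw [hjoint, card_powersetCard,
    card_filter_powersetCard_subset_div_choose (subset_univ (A ∪ B)) hk,
    card_filter_powersetCard_subset_div_choose (subset_univ A) hk,
    card_filter_powersetCard_subset_div_choose (subset_univ B) hk, card_union_of_disjoint hAB]
  exact Nat.descFactorial_add_div_le hk _ _

/-- Negative correlation for uniformly random `k`-subsets: if `S` is uniform among the
`k`-element subsets of a finite set `X` and `A, B` are disjoint nonempty subsets of `X`,
then `P(A ⊆ S ∧ B ⊆ S) ≤ P(A ⊆ S) · P(B ⊆ S)`, where each probability is the number of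
favourable `k`-subsets divided by the total number of `k`-subsets. -/
theorem uniform_subset_negative_correlation {X : Type*} [Fintype X] [DecidableEq X]
    (k : ℕ) (hk : k ≤ Fintype.card X) (hN : 1 ≤ Fintype.card X)
    (A B : Finset X) (hA : A.Nonempty) (hB : B.Nonempty) (hAB : Disjoint A B) :
    ((((Finset.univ : Finset X).powersetCard k).filter (fun s => A ⊆ s ∧ B ⊆ s)).card : ℚ) /
        (((Finset.univ : Finset X).powersetCard k).card : ℚ) ≤
      (((((Finset.univ : Finset X).powersetCard k).filter (fun s => A ⊆ s)).card : ℚ) /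
          (((Finset.univ : Finset X).powersetCard k).card : ℚ)) *
        (((((Finset.univ : Finset X).powersetCard k).filter (fun s => B ⊆ s)).card : ℚ) /
          (((Finset.univ : Finset X).powersetCard k).card : ℚ)) :=
  uniform_subset_negative_correlation_general k hk A B hAB
end
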